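/- arXiv:1205.5945 — 7 statements merged into one kernel-verified Lean document; each statement's English description precedes it below -/
import Mathlib

section
/- Let R be a unique factorization domain that is not a field, and let M be a finitely generated R-module. Then M is pseudo-null if and only if there exist nonzero elements f₁, f₂ ∈ R having no common non-unit divisor such that f₁ · M = 0 and f₂ · M = 0. -/
/-!
In a UFD the height-one primes are exactly the principal ideals `(p)` with `p` prime, and for a
finitely generated `M` the localization `M_(p)` vanishes iff `Ann M ⊄ (p)`. So `M` is pseudo-null
iff `Ann M` lies in no `(p)`. Then, given a nonzero `f₁ ∈ Ann M`, prime avoidance over the finitely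
many prime factors of `f₁` produces `f₂ ∈ Ann M` sharing no prime factor with `f₁`; conversely a
common prime divisor of two such annihilators is impossible.
-/

/-- A module `M` over `R` is pseudo-null if its localization at every height-one
prime ideal of `R` vanishes. -/
def IsPseudoNull (R : Type*) [CommRing R] (M : Type*) [AddCommGroup M] [Module R M] : Prop :=
  ∀ P : PrimeSpectrum R, Order.height P = 1 →
    Subsingleton (LocalizedModule P.asIdeal.primeCompl M)

open UniqueFactorizationMonoid

theorem Ideal.exists_mem_forall_not_dvd_of_prime {R : Type*} [CommRing R] {I : Ideal R}
    {s : Finset R} (hs : ∀ p ∈ s, Prime p) (hI : ∀ p ∈ s, ¬I ≤ Ideal.span {p}) :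
    ∃ x ∈ I, ∀ p ∈ s, ¬p ∣ x := by
  have hnsub : ¬(I : Set R) ⊆ ⋃ p ∈ (s : Set R), Ideal.span {p} := by
    rw [Ideal.subset_union_prime 0 0 fun p hp _ _ ↦
      (Ideal.span_singleton_prime (hs p hp).ne_zero).mpr (hs p hp)]
    rintro ⟨p, hp, hle⟩
    exact hI p hp hle
  obtain ⟨x, hxI, hx⟩ := Set.not_subset.mp hnsub
  refine ⟨x, hxI, fun p hp hpx ↦ hx (Set.mem_biUnion hp ?_)⟩
  exact Ideal.mem_span_singleton.mpr hpx

section UniqueFactorizationDomain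

variable {R : Type*} [CommRing R] [IsDomain R] [UniqueFactorizationMonoid R]

theorem Ideal.IsPrime.eq_bot_of_lt_span_prime {Q : Ideal R} (hQ : Q.IsPrime) {p : R}
    (hp : Prime p) (hlt : Q < Ideal.span {p}) : Q = ⊥ := by
  by_contra hQ0
  obtain ⟨q, hqQ, hq⟩ := hQ.exists_mem_prime_of_ne_bot hQ0
  have hpq : Associated p q :=
    hp.associated_of_dvd hq (Ideal.mem_span_singleton.mp (hlt.le hqQ))
  refine hlt.not_ge ?_
  rwa [Ideal.span_singleton_eq_span_singleton.mpr hpq, Ideal.span_singleton_le_iff_mem]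

theorem PrimeSpectrum.height_eq_one_iff_exists_prime (P : PrimeSpectrum R) :
    Order.height P = 1 ↔ ∃ p : R, Prime p ∧ P.asIdeal = Ideal.span {p} := by
  constructor
  · intro hP
    rw [← P.height_eq_orderHeight] at hP
    obtain ⟨p, hpP, hp⟩ := P.2.exists_mem_prime_of_ne_bot (Ideal.ne_bot_of_height_eq_one hP)
    exact ⟨p, hp, P.asIdeal.eq_span_singleton_of_height_eq_one hP hpP hp⟩
  · rintro ⟨p, hp, hP⟩
    refine le_antisymm ?_ ?_
    · refine (Order.height_le_coe_iff (n := 1)).mpr fun Q hQP ↦ ?_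
      have hQ : Q = ⊥ := PrimeSpectrum.ext (Q.2.eq_bot_of_lt_span_prime hp (hP ▸ hQP))
      simp [hQ]
    · refine Order.one_le_iff_pos.mpr (Order.height_pos_of_bot_lt (bot_lt_iff_ne_bot.mpr ?_))
      intro hP0
      apply hp.ne_zero
      rw [← Ideal.span_singleton_eq_bot, ← hP, hP0]
      rfl

theorem Ideal.exists_isRelPrime_of_forall_not_le_span_prime (hR : ¬IsField R) {I : Ideal R}
    (hI : ∀ p : R, Prime p → ¬I ≤ Ideal.span {p}) :
    ∃ f₁ f₂ : R, f₁ ≠ 0 ∧ f₂ ≠ 0 ∧ IsRelPrime f₁ f₂ ∧ f₁ ∈ I ∧ f₂ ∈ I := by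
  classical
  obtain ⟨P, hP0, hP⟩ := Ring.not_isField_iff_exists_prime.mp hR
  obtain ⟨p₀, -, hp₀⟩ := hP.exists_mem_prime_of_ne_bot hP0
  obtain ⟨f₁, hf₁I, hf₁p₀⟩ := SetLike.not_le_iff_exists.mp (hI p₀ hp₀)
  have hf₁ : f₁ ≠ 0 := fun h ↦ hf₁p₀ (h ▸ Submodule.zero_mem _)
  -- avoiding `p₀` as well makes `f₂` nonzero even when `f₁` is a unit
  set s := insert p₀ (factors f₁).toFinset
  have hs : ∀ p ∈ s, Prime p := by
    simpa [s] using ⟨hp₀, fun q hq ↦ prime_of_factor q hq⟩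
  obtain ⟨f₂, hf₂I, hf₂⟩ := Ideal.exists_mem_forall_not_dvd_of_prime hs fun p hp ↦ hI p (hs p hp)
  have hf₂0 : f₂ ≠ 0 := fun h ↦ hf₂ p₀ (Finset.mem_insert_self _ _) (h ▸ dvd_zero p₀)
  refine ⟨f₁, f₂, hf₁, hf₂0, (isRelPrime_iff_no_prime_factors hf₁).mpr ?_, hf₁I, hf₂I⟩
  intro d hd₁ hd₂ hd
  obtain ⟨q, hq, hdq⟩ := exists_mem_factors_of_dvd hf₁ hd.irreducible hd₁
  exact hf₂ q (by simp [s, hq]) (hdq.symm.dvd.trans hd₂)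

theorem Ideal.forall_not_le_span_prime_iff (hR : ¬IsField R) (I : Ideal R) :
    (∀ p : R, Prime p → ¬I ≤ Ideal.span {p}) ↔
      ∃ f₁ f₂ : R, f₁ ≠ 0 ∧ f₂ ≠ 0 ∧ IsRelPrime f₁ f₂ ∧ f₁ ∈ I ∧ f₂ ∈ I := by
  refine ⟨Ideal.exists_isRelPrime_of_forall_not_le_span_prime hR, ?_⟩
  rintro ⟨f₁, f₂, -, -, hf, hf₁, hf₂⟩ p hp hle
  exact hp.not_isUnit (hf (Ideal.mem_span_singleton.mp (hle hf₁))
    (Ideal.mem_span_singleton.mp (hle hf₂)))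

theorem isPseudoNull_iff_forall_prime_not_annihilator_le (M : Type*) [AddCommGroup M]
    [Module R M] [Module.Finite R M] :
    IsPseudoNull R M ↔ ∀ p : R, Prime p → ¬Module.annihilator R M ≤ Ideal.span {p} := by
  simp only [IsPseudoNull, ← Module.notMem_support_iff, Module.mem_support_iff_of_finite,
    PrimeSpectrum.height_eq_one_iff_exists_prime]
  constructor
  · intro h p hp
    exact h ⟨_, (Ideal.span_singleton_prime hp.ne_zero).mpr hp⟩ ⟨p, hp, rfl⟩
  · rintro h P ⟨p, hp, hP⟩
    rw [hP]
    exact h p hp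

end UniqueFactorizationDomain

/-- Over a UFD `R` which is not a field, a finitely generated module `M` is pseudo-null
iff it is annihilated by two nonzero elements having no common non-unit divisor. -/
theorem stmt_0 (R : Type*) [CommRing R] [IsDomain R] [UniqueFactorizationMonoid R]
    (hR : ¬ IsField R) (M : Type*) [AddCommGroup M] [Module R M] [Module.Finite R M] :
    IsPseudoNull R M ↔
      ∃ f₁ f₂ : R, f₁ ≠ 0 ∧ f₂ ≠ 0 ∧ (∀ d : R, d ∣ f₁ → d ∣ f₂ → IsUnit d) ∧
        (∀ m : M, f₁ • m = 0) ∧ (∀ m : M, f₂ • m = 0) := by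
  rw [isPseudoNull_iff_forall_prime_not_annihilator_le, Ideal.forall_not_le_span_prime_iff hR]
  simp only [Module.mem_annihilator]
  rfl
end

section
/- Let R be a Noetherian unique factorization domain and let M and N be finitely generated torsion R-modules (i.e., every element is annihilated by some nonzero element of R). If there exists a pseudo-isomorphism f : M → N, then there exists a pseudo-isomorphism g : N → M. Consequently, pseudo-isomorphism is an equivalence relation on the class of finitely generated torsion R-modules. -/
/-- A linear map is a pseudo-isomorphism if its kernel and cokernel are pseudo-null. -/
def IsPseudoIsom (R : Type*) [CommRing R] {M N : Type*} [AddCommGroup M] [Module R M]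
    [AddCommGroup N] [Module R N] (f : M →ₗ[R] N) : Prop :=
  IsPseudoNull R (LinearMap.ker f) ∧ IsPseudoNull R (N ⧸ LinearMap.range f)

open Function

section Localization

variable {R M N : Type*} [CommRing R] [AddCommGroup M] [Module R M]
  [AddCommGroup N] [Module R N]

namespace LocalizedModule

lemma bijective_smul_of_mem {S : Submonoid R} {s : R} (hs : s ∈ S) :
    Bijective (fun x : LocalizedModule S M => s • x) :=
  (Module.End.isUnit_iff _).mp (IsLocalizedModule.map_units (mkLinearMap S M) ⟨s, hs⟩)

lemma smul_eq_zero_of_forall_mul_smul_eq_zero {S : Submonoid R} {u w : R} (hu : u ∈ S)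
    (h : ∀ m : M, (u * w) • m = 0) (x : LocalizedModule S M) : w • x = 0 := by
  refine (bijective_smul_of_mem hu).1 ?_
  simp only [smul_zero, ← mul_smul]
  induction x using LocalizedModule.induction_on with
  | h m t => rw [smul'_mk, h, zero_mk]

end LocalizedModule

lemma LinearMap.localizedMap_injective_iff_subsingleton_localized_ker (S : Submonoid R)
    (φ : M →ₗ[R] N) :
    Injective (LocalizedModule.map S φ) ↔ Subsingleton (LocalizedModule S (LinearMap.ker φ)) := by
  have := LinearMap.toKerLocalized_isLocalizedModule (Localization S) S
    (LocalizedModule.mkLinearMap S M) (LocalizedModule.mkLinearMap S N) φ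
  rw [(IsLocalizedModule.iso S (LinearMap.toKerIsLocalized S (LocalizedModule.mkLinearMap S M)
    (LocalizedModule.mkLinearMap S N) φ)).subsingleton_congr, Submodule.subsingleton_iff_eq_bot,
    LinearMap.ker_eq_bot]
  rfl

end Localization

section PseudoIsom

variable {R M N L : Type*} [CommRing R] [AddCommGroup M] [Module R M]
  [AddCommGroup N] [Module R N] [AddCommGroup L] [Module R L]

lemma isPseudoIsom_iff_bijective_localizedMap (f : M →ₗ[R] N) :
    IsPseudoIsom R f ↔ ∀ P : PrimeSpectrum R, Order.height P = 1 →
      Bijective (LocalizedModule.map P.asIdeal.primeCompl f) := by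
  simp only [IsPseudoIsom, IsPseudoNull, Bijective,
    LinearMap.localizedMap_injective_iff_subsingleton_localized_ker,
    LinearMap.localizedMap_surjective_iff_subsingleton_localized_coker, ← forall_and]

lemma isPseudoIsom_id : IsPseudoIsom R (LinearMap.id : M →ₗ[R] M) :=
  (isPseudoIsom_iff_bijective_localizedMap _).mpr fun P _ => by
    rw [LocalizedModule.map_id]
    exact bijective_id

lemma IsPseudoIsom.comp {g : N →ₗ[R] L} {f : M →ₗ[R] N} (hg : IsPseudoIsom R g)
    (hf : IsPseudoIsom R f) : IsPseudoIsom R (g ∘ₗ f) := by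
  rw [isPseudoIsom_iff_bijective_localizedMap] at hf hg ⊢
  intro P hP
  let S := P.asIdeal.primeCompl
  have hcomp := congrArg DFunLike.coe (IsLocalizedModule.map_comp' S
    (LocalizedModule.mkLinearMap S M) (LocalizedModule.mkLinearMap S N)
    (LocalizedModule.mkLinearMap S L) f g)
  exact hcomp ▸ (hg P hP).comp (hf P hP)

end PseudoIsom

section Gluing

variable {R M N : Type*} [CommRing R] [AddCommGroup M] [Module R M]
  [AddCommGroup N] [Module R N]

lemma exists_bijective_localizedMap_of_bijective_localizedMap [Module.FinitePresentation R N]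
    (S : Submonoid R) {f : M →ₗ[R] N} (hf : Bijective (LocalizedModule.map S f)) :
    ∃ g : N →ₗ[R] M, Bijective (LocalizedModule.map S g) := by
  let e := LinearEquiv.ofBijective ((LocalizedModule.map S f).restrictScalars R) hf
  obtain ⟨g, s, hg, -⟩ := Module.exists_localizedMap_surjective_of_surjective S
    (LocalizedModule.mkLinearMap S N) (LocalizedModule.mkLinearMap S M) e.symm.surjective
  refine ⟨g, ?_⟩
  have hcoe : ⇑(LocalizedModule.map S g) = (fun x => (s : R) • x) ∘ e.symm :=
    congrArg DFunLike.coe hg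
  rw [hcoe]
  exact (LocalizedModule.bijective_smul_of_mem s.2).comp e.symm.bijective

lemma bijective_localizedMap_sum_smul (s : Finset (PrimeSpectrum R))
    (g : PrimeSpectrum R → N →ₗ[R] M) (w : PrimeSpectrum R → R)
    (hg : ∀ P ∈ s, Bijective (LocalizedModule.map P.asIdeal.primeCompl (g P)))
    (hw : ∀ P ∈ s, w P ∉ P.asIdeal)
    (hkill : ∀ P ∈ s, ∀ Q ∈ s, P ≠ Q →
      ∀ x : LocalizedModule Q.asIdeal.primeCompl N, w P • x = 0)
    {Q : PrimeSpectrum R} (hQ : Q ∈ s) :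
    Bijective (LocalizedModule.map Q.asIdeal.primeCompl (∑ P ∈ s, w P • g P)) := by
  have hsum : ⇑(LocalizedModule.map Q.asIdeal.primeCompl (∑ P ∈ s, w P • g P)) =
      (fun y => w Q • y) ∘ LocalizedModule.map Q.asIdeal.primeCompl (g Q) := by
    ext x
    simp only [map_sum, map_smul, LinearMap.sum_apply, LinearMap.smul_apply, comp_apply]
    refine Finset.sum_eq_single_of_mem Q hQ fun P hP hPQ => ?_
    rw [← LinearMap.map_smul_of_tower, hkill P hP Q hQ hPQ, map_zero]
  rw [hsum]
  exact (LocalizedModule.bijective_smul_of_mem (hw Q hQ)).comp (hg Q hQ)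

end Gluing

namespace PrimeSpectrum

variable {R : Type*} [CommRing R] [IsDomain R] [UniqueFactorizationMonoid R]

lemma finite_setOf_height_eq_one_mem {b : R} (hb : b ≠ 0) :
    {P : PrimeSpectrum R | Order.height P = 1 ∧ b ∈ P.asIdeal}.Finite := by
  refine (((UniqueFactorizationMonoid.factors b).finite_toSet.image
    fun p => Ideal.span {p}).preimage fun _ _ _ _ => PrimeSpectrum.ext).subset ?_
  rintro P ⟨hP, hbP⟩
  have hprod : (UniqueFactorizationMonoid.factors b).prod ∈ P.asIdeal :=
    Ideal.mem_of_dvd _ (UniqueFactorizationMonoid.factors_prod hb).symm.dvd hbP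
  obtain ⟨p, hp, hpP⟩ := (P.isPrime.multiset_prod_mem_iff_exists_mem _).mp hprod
  exact ⟨p, hp, (Ideal.eq_span_singleton_of_height_eq_one
    (by rwa [height_eq_orderHeight]) hpP (UniqueFactorizationMonoid.prime_of_factor p hp)).symm⟩

lemma exists_mul_eq_notMem_of_height_eq_one {b : R} (hb : b ≠ 0) {P : PrimeSpectrum R}
    (hP : Order.height P = 1) :
    ∃ u w : R, u * w = b ∧ w ∉ P.asIdeal ∧
      ∀ Q : PrimeSpectrum R, Order.height Q = 1 → u ∈ Q.asIdeal → Q = P := by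
  have hP' : P.asIdeal.height = 1 := by rwa [height_eq_orderHeight]
  obtain ⟨p, hpP, hp⟩ := P.isPrime.exists_mem_prime_of_ne_bot (Ideal.ne_bot_of_height_eq_one hP')
  have hPp := Ideal.eq_span_singleton_of_height_eq_one hP' hpP hp
  obtain ⟨n, w, hpw, rfl⟩ := WfDvdMonoid.max_power_factor hb hp.irreducible
  refine ⟨p ^ n, w, rfl, fun hw => hpw (Ideal.mem_span_singleton.mp (hPp ▸ hw)), ?_⟩
  intro Q hQ hpQ
  ext1
  rw [hPp, Ideal.eq_span_singleton_of_height_eq_one (by rwa [height_eq_orderHeight])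
    (Q.isPrime.mem_of_pow_mem n hpQ) hp]

end PrimeSpectrum

theorem IsPseudoIsom.exists_reverse {R M N : Type*} [CommRing R] [IsDomain R]
    [IsNoetherianRing R] [UniqueFactorizationMonoid R] [AddCommGroup M] [Module R M]
    [AddCommGroup N] [Module R N] [Module.Finite R N] (hN : Module.IsTorsion R N)
    {f : M →ₗ[R] N} (hf : IsPseudoIsom R f) : ∃ g : N →ₗ[R] M, IsPseudoIsom R g := by
  obtain ⟨b, hb_ann, hb_reg⟩ := Submodule.annihilator_top_inter_nonZeroDivisors hN
  have hb0 : b ≠ 0 := nonZeroDivisors.ne_zero hb_reg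
  have hbN (n : N) : b • n = 0 := Submodule.mem_annihilator.mp hb_ann n Submodule.mem_top
  have : Module.FinitePresentation R N := Module.finitePresentation_of_finite R N
  rw [isPseudoIsom_iff_bijective_localizedMap] at hf
  let s := (PrimeSpectrum.finite_setOf_height_eq_one_mem hb0).toFinset
  have hs {P : PrimeSpectrum R} : P ∈ s ↔ Order.height P = 1 ∧ b ∈ P.asIdeal :=
    Set.Finite.mem_toFinset _
  choose! g hg using fun P (hP : P ∈ s) =>
    exists_bijective_localizedMap_of_bijective_localizedMap _ (hf P (hs.mp hP).1)
  choose! u w huw hw hu using fun P (hP : P ∈ s) =>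
    PrimeSpectrum.exists_mul_eq_notMem_of_height_eq_one hb0 (hs.mp hP).1
  refine ⟨∑ P ∈ s, w P • g P, (isPseudoIsom_iff_bijective_localizedMap _).mpr fun Q hQ => ?_⟩
  by_cases hbQ : b ∈ Q.asIdeal
  · refine bijective_localizedMap_sum_smul s g w hg hw (fun P hP Q' hQ' hPQ' => ?_)
      (hs.mpr ⟨hQ, hbQ⟩)
    refine LocalizedModule.smul_eq_zero_of_forall_mul_smul_eq_zero (u := u P) ?_
      fun n => huw P hP ▸ hbN n
    exact fun huQ' => hPQ' (hu P hP Q' (hs.mp hQ').1 huQ').symm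
  · have : Subsingleton (LocalizedModule Q.asIdeal.primeCompl N) :=
      LocalizedModule.subsingleton_iff.mpr fun n => ⟨b, hbQ, hbN n⟩
    have : Subsingleton (LocalizedModule Q.asIdeal.primeCompl M) := (hf Q hQ).1.subsingleton
    exact ⟨fun _ _ _ => Subsingleton.elim _ _, fun _ => ⟨0, Subsingleton.elim _ _⟩⟩

theorem stmt_2_general (R : Type*) [CommRing R] [IsDomain R] [IsNoetherianRing R]
    [UniqueFactorizationMonoid R]
    (M N : Type*) [AddCommGroup M] [Module R M]
    [AddCommGroup N] [Module R N] [Module.Finite R N]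
    (hN : Module.IsTorsion R N)
    (h : ∃ f : M →ₗ[R] N, IsPseudoIsom R f) :
    (∃ g : N →ₗ[R] M, IsPseudoIsom R g) ∧
    -- reflexivity
    (∀ (P : Type*) [AddCommGroup P] [Module R P] [Module.Finite R P],
      Module.IsTorsion R P → ∃ f : P →ₗ[R] P, IsPseudoIsom R f) ∧
    -- transitivity
    (∀ (P Q S : Type*) [AddCommGroup P] [Module R P] [Module.Finite R P]
        [AddCommGroup Q] [Module R Q] [Module.Finite R Q]
        [AddCommGroup S] [Module R S] [Module.Finite R S],
      Module.IsTorsion R P → Module.IsTorsion R Q → Module.IsTorsion R S →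
      (∃ f : P →ₗ[R] Q, IsPseudoIsom R f) → (∃ g : Q →ₗ[R] S, IsPseudoIsom R g) →
      ∃ h : P →ₗ[R] S, IsPseudoIsom R h) := by
  obtain ⟨f, hf⟩ := h
  exact ⟨hf.exists_reverse hN, fun _ _ _ _ _ => ⟨_, isPseudoIsom_id⟩,
    fun _ _ _ _ _ _ _ _ _ _ _ _ _ _ _ ⟨f, hf⟩ ⟨g, hg⟩ => ⟨_, hg.comp hf⟩⟩

/-- Over a Noetherian UFD, if there is a pseudo-isomorphism `M → N` between finitely
generated torsion modules then there is one `N → M`. Consequently — together with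
reflexivity and transitivity, also stated — pseudo-isomorphism is an equivalence relation
on finitely generated torsion modules. -/
theorem stmt_2 (R : Type*) [CommRing R] [IsDomain R] [IsNoetherianRing R]
    [UniqueFactorizationMonoid R]
    (M N : Type*) [AddCommGroup M] [Module R M] [Module.Finite R M]
    [AddCommGroup N] [Module R N] [Module.Finite R N]
    (hM : Module.IsTorsion R M) (hN : Module.IsTorsion R N)
    (h : ∃ f : M →ₗ[R] N, IsPseudoIsom R f) :
    (∃ g : N →ₗ[R] M, IsPseudoIsom R g) ∧
    -- reflexivity
    (∀ (P : Type*) [AddCommGroup P] [Module R P] [Module.Finite R P],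
      Module.IsTorsion R P → ∃ f : P →ₗ[R] P, IsPseudoIsom R f) ∧
    -- transitivity
    (∀ (P Q S : Type*) [AddCommGroup P] [Module R P] [Module.Finite R P]
        [AddCommGroup Q] [Module R Q] [Module.Finite R Q]
        [AddCommGroup S] [Module R S] [Module.Finite R S],
      Module.IsTorsion R P → Module.IsTorsion R Q → Module.IsTorsion R S →
      (∃ f : P →ₗ[R] Q, IsPseudoIsom R f) → (∃ g : Q →ₗ[R] S, IsPseudoIsom R g) →
      ∃ h : P →ₗ[R] S, IsPseudoIsom R h) :=
  stmt_2_general R M N hN h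
end

section
/- Let R be a Noetherian unique factorization domain with fraction field Q, and let M be a finitely generated torsion R-module. Regard Q/R (the quotient of Q by the image of R) as an R-module. Then Hom_R(M, Q/R) is pseudo-isomorphic to M: there exists an R-linear map from Hom_R(M, Q/R) to M with pseudo-null kernel and cokernel. -/
/-!
Let `a ≠ 0` annihilate `M` and let `S` be the monoid of elements relatively prime to `a`. In a
UFD every height-one prime is `(π)` for a prime `π`, so a module killed by `a` in which every
element is killed by some element of `S` is pseudo-null: a height-one prime either misses `a`, or
contains `a` and then misses `S`. By prime avoidance `S⁻¹R` is a PID, and there the structure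
theorem gives `Hom(S⁻¹M, Q/S⁻¹R) ≅ S⁻¹M`, the cyclic case being `(Q/R)[b] = b⁻¹R/R ≅ R/(b)`.
Since `Hom_R(M, Q/R)` is finitely presented and localizes to `Hom(S⁻¹M, Q/S⁻¹R)`, this
isomorphism lifts, up to an element of `S`, to a map `Hom_R(M, Q/R) → M` whose kernel and cokernel
are `S`-torsion and killed by `a`, hence pseudo-null.
-/

open Module Submodule

theorem isPseudoNull_iff_forall_exists_smul_eq_zero {R X : Type*} [CommRing R] [AddCommGroup X]
    [Module R X] :
    IsPseudoNull R X ↔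
      ∀ P : PrimeSpectrum R, Order.height P = 1 → ∀ x : X, ∃ r ∉ P.asIdeal, r • x = 0 :=
  forall₂_congr fun _ _ ↦ LocalizedModule.subsingleton_iff

def relPrimeSubmonoid {α : Type*} [CommMonoid α] [DecompositionMonoid α] (a : α) :
    Submonoid α where
  carrier := {s | IsRelPrime a s}
  one_mem' := isRelPrime_one_right
  mul_mem' := IsRelPrime.mul_right

section UniqueFactorization

variable {R : Type*} [CommRing R] [IsDomain R] [UniqueFactorizationMonoid R]

theorem IsRelPrime.notMem_of_height_eq_one {a s : R} (h : IsRelPrime a s) {P : Ideal R}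
    [P.IsPrime] (hP : P.height = 1) (ha : a ∈ P) : s ∉ P := by
  intro hs
  obtain ⟨π, hπP, hπ⟩ :=
    Ideal.IsPrime.exists_mem_prime_of_ne_bot ‹_› (P.ne_bot_of_height_eq_one hP)
  rw [P.eq_span_singleton_of_height_eq_one hP hπP hπ, Ideal.mem_span_singleton] at ha hs
  exact hπ.not_isUnit (h ha hs)

theorem isPseudoNull_of_isTorsionBy_of_isTorsion' {X : Type*} [AddCommGroup X] [Module R X]
    {a : R} (ha : IsTorsionBy R X a) (hS : IsTorsion' X (relPrimeSubmonoid a)) :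
    IsPseudoNull R X := by
  refine isPseudoNull_iff_forall_exists_smul_eq_zero.mpr fun P hP x ↦ ?_
  by_cases haP : a ∈ P.asIdeal
  · obtain ⟨⟨s, hs⟩, hsx⟩ := @hS x
    exact ⟨s, IsRelPrime.notMem_of_height_eq_one hs (by rwa [P.height_eq_orderHeight]) haP, hsx⟩
  · exact ⟨a, haP, @ha x⟩

open UniqueFactorizationMonoid in
theorem Ideal.isPrincipal_of_disjoint_relPrimeSubmonoid {a : R} (ha : a ≠ 0) {p : Ideal R}
    [p.IsPrime] (hdisj : Disjoint (relPrimeSubmonoid a : Set R) p) : p.IsPrincipal := by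
  classical
  rcases eq_or_ne p ⊥ with rfl | hp
  · exact bot_isPrincipal
  obtain ⟨π, hπp, hπ⟩ := Ideal.IsPrime.exists_mem_prime_of_ne_bot ‹_› hp
  have hfactor {q : R} (hq : q ∈ (factors a).toFinset) : Prime q :=
    prime_of_factor q (Multiset.mem_toFinset.mp hq)
  have hcover : (p : Set R) ⊆ ⋃ q ∈ (factors a).toFinset, (Ideal.span {q} : Set R) := by
    intro x hx
    obtain ⟨d, hda, hdx, hd⟩ : ∃ d, d ∣ a ∧ d ∣ x ∧ Prime d := by
      have : ¬IsRelPrime a x := fun h ↦ Set.disjoint_left.mp hdisj h hx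
      simpa [isRelPrime_iff_no_prime_factors ha] using this
    obtain ⟨q, hqa, hdq⟩ := hd.exists_mem_multiset_dvd (hda.trans (factors_prod ha).symm.dvd)
    have hq := Multiset.mem_toFinset.mpr hqa
    exact Set.mem_biUnion hq <| Ideal.mem_span_singleton.mpr <|
      (hd.associated_of_dvd (hfactor hq) hdq).symm.dvd.trans hdx
  -- prime avoidance puts `p` inside some `(q)`; as `p` contains the prime `π`, `p = (π) = (q)`
  obtain ⟨q, hq, hpq⟩ := (Ideal.subset_union_prime 0 0 fun q hq _ _ ↦
    (Ideal.span_singleton_prime (hfactor hq).ne_zero).mpr (hfactor hq)).mp hcover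
  have hqπ : Associated q π :=
    (hfactor hq).associated_of_dvd hπ (Ideal.mem_span_singleton.mp (hpq hπp))
  refine ⟨q, le_antisymm hpq ?_⟩
  change Ideal.span {q} ≤ p
  rwa [Ideal.span_singleton_eq_span_singleton.mpr hqπ, Ideal.span_singleton_le_iff_mem]

theorem isPrincipalIdealRing_of_isLocalization_relPrimeSubmonoid {a : R} (ha : a ≠ 0)
    (R' : Type*) [CommRing R'] [Algebra R R'] [IsLocalization (relPrimeSubmonoid a) R'] :
    IsPrincipalIdealRing R' := by
  refine IsPrincipalIdealRing.of_prime fun Q hQ ↦ ?_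
  obtain ⟨hp, hdisj⟩ :=
    (IsLocalization.isPrime_iff_isPrime_disjoint (relPrimeSubmonoid a) R' Q).mp hQ
  rw [← IsLocalization.map_under (relPrimeSubmonoid a) R' Q]
  exact (Ideal.isPrincipal_of_disjoint_relPrimeSubmonoid ha hdisj).map_ringHom _

end UniqueFactorization

local notation:35 K:35 " ⧸ₐ " A:36 => K ⧸ LinearMap.range (Algebra.linearMap A K)

noncomputable def linearMapQuotSpanSingletonEquivTorsionBy {A : Type*} [CommRing A] (b : A)
    (X : Type*) [AddCommGroup X] [Module A X] : ((A ⧸ A ∙ b) →ₗ[A] X) ≃ₗ[A] torsionBy A X b where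
  toFun φ := ⟨φ (Submodule.Quotient.mk 1), by
    rw [mem_torsionBy_iff, ← map_smul, ← Quotient.mk_smul, smul_eq_mul, mul_one,
      (Quotient.mk_eq_zero _).mpr (mem_span_singleton_self b), map_zero]⟩
  map_add' _ _ := rfl
  map_smul' _ _ := rfl
  invFun x := liftQSpanSingleton b (LinearMap.toSpanSingleton A X x) x.2
  left_inv φ := linearMap_qext _ <| LinearMap.ext_ring <| one_smul A _
  right_inv x := Subtype.ext <| one_smul A _

theorem Module.Finite.linearMap_of_isNoetherianRing (R M N : Type*) [CommRing R]
    [IsNoetherianRing R] [AddCommGroup M] [Module R M] [Module.Finite R M] [AddCommGroup N]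
    [Module R N] [Module.Finite R N] : Module.Finite R (M →ₗ[R] N) := by
  obtain ⟨n, π, hπ⟩ := Module.Finite.exists_fin' R M
  exact Module.Finite.of_injective (LinearMap.lcomp R N π) hπ.injective_linearMapComp_right

section FractionQuotient

variable {A : Type*} [CommRing A] (K : Type*) [Field K] [Algebra A K] [IsFractionRing A K]

noncomputable def quotSpanSingletonEquivTorsionByFracQuot {b : A} (hb : b ≠ 0) :
    (A ⧸ A ∙ b) ≃ₗ[A] torsionBy A (K ⧸ₐ A) b := by
  have hbK : algebraMap A K b ≠ 0 := (map_ne_zero_iff _ (IsFractionRing.injective A K)).mpr hb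
  let ψ : A →ₗ[A] K ⧸ₐ A := mkQ _ ∘ₗ LinearMap.toSpanSingleton A K (algebraMap A K b)⁻¹
  have hker : LinearMap.ker ψ = A ∙ b := by
    ext r
    simp [ψ, Quotient.mk_eq_zero, mem_span_singleton, Algebra.smul_def,
      eq_mul_inv_iff_mul_eq₀ hbK, ← map_mul, (IsFractionRing.injective A K).eq_iff]
  have hrange : LinearMap.range ψ = torsionBy A (K ⧸ₐ A) b := by
    refine le_antisymm ?_ fun x hx ↦ ?_
    · rintro _ ⟨r, rfl⟩
      have hbr : b • r ∈ LinearMap.ker ψ :=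
        hker ▸ Ideal.mul_mem_right r _ (mem_span_singleton_self b)
      rw [mem_torsionBy_iff, ← map_smul, LinearMap.mem_ker.mp hbr]
    · obtain ⟨ξ, rfl⟩ := Submodule.Quotient.mk_surjective _ x
      obtain ⟨c, hc⟩ := (Quotient.mk_eq_zero _).mp ((Quotient.mk_smul _ b ξ).symm.trans hx)
      refine ⟨c, congrArg Submodule.Quotient.mk ?_⟩
      simp only [LinearMap.toSpanSingleton_apply, Algebra.smul_def]
      rw [show algebraMap A K c = algebraMap A K b * ξ from hc.trans (Algebra.smul_def b ξ),
        mul_comm, inv_mul_cancel_left₀ hbK]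
  exact (quotEquivOfEq _ _ hker.symm).trans <|
    ψ.quotKerEquivRange.trans (LinearEquiv.ofEq _ _ hrange)

theorem nonempty_linearMap_fracQuot_equiv_of_isTorsion [IsDomain A] [IsPrincipalIdealRing A]
    (N : Type*)
    [AddCommGroup N] [Module A N] [Module.Finite A N] (hN : IsTorsion A N) :
    Nonempty ((N →ₗ[A] K ⧸ₐ A) ≃ₗ[A] N) := by
  classical
  obtain ⟨ι, _, p, hp, e, ⟨g⟩⟩ := Module.equiv_directSum_of_isTorsion hN
  let C i := A ⧸ A ∙ p i ^ e i
  let e₀ : N ≃ₗ[A] ∀ i, C i := g.trans (DirectSum.linearEquivFunOnFintype A ι C)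
  have hdual (i : ι) : (C i →ₗ[A] K ⧸ₐ A) ≃ₗ[A] C i :=
    (linearMapQuotSpanSingletonEquivTorsionBy _ _).trans
      (quotSpanSingletonEquivTorsionByFracQuot K (pow_ne_zero _ (hp i).ne_zero)).symm
  exact ⟨(e₀.arrowCongr (.refl A _)).trans <| (LinearMap.lsum A C A).symm.trans <|
    (LinearEquiv.piCongrRight hdual).trans e₀.symm⟩

theorem Module.Finite.linearMap_fracQuot_of_isTorsionBy [IsNoetherianRing A] {M : Type*}
    [AddCommGroup M] [Module A M] [Module.Finite A M] {a : A} (ha : a ≠ 0)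
    (haM : IsTorsionBy A M a) : Module.Finite A (M →ₗ[A] K ⧸ₐ A) := by
  let T := torsionBy A (K ⧸ₐ A) a
  have : Module.Finite A T := Module.Finite.equiv (quotSpanSingletonEquivTorsionByFracQuot K ha)
  have := Module.Finite.linearMap_of_isNoetherianRing A M T
  refine Module.Finite.of_surjective (LinearMap.llcomp A M T _ T.subtype)
    fun φ ↦ ⟨φ.codRestrict T fun m ↦ ?_, rfl⟩
  rw [mem_torsionBy_iff, ← map_smul, haM, map_zero]

end FractionQuotient

theorem exists_isLocalizedModule_fracQuot {R : Type*} [CommRing R] (S : Submonoid R)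
    (R' K : Type*) [CommRing R'] [Algebra R R'] [IsLocalization S R'] [CommRing K] [Algebra R K]
    [Algebra R' K] [IsScalarTower R R' K] :
    ∃ g : (K ⧸ₐ R) →ₗ[R] K ⧸ₐ R', IsLocalizedModule S g := by
  have := isLocalizedModule_id S K R'
  have h : (LinearMap.range (Algebra.linearMap R K)).localized' R' S LinearMap.id =
      LinearMap.range (Algebra.linearMap R' K) := by
    rw [localized'_eq_span]
    refine le_antisymm (span_le.mpr ?_) ?_
    · rintro _ ⟨_, ⟨r, rfl⟩, rfl⟩
      exact ⟨algebraMap R R' r, (IsScalarTower.algebraMap_apply R R' K r).symm⟩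
    · rintro _ ⟨r', rfl⟩
      rw [Algebra.linearMap_apply, ← mul_one (algebraMap R' K r'), ← Algebra.smul_def]
      exact smul_mem _ r' (subset_span ⟨1, ⟨1, by simp⟩, rfl⟩)
  exact ⟨(quotEquivOfEq _ _ h).restrictScalars R ∘ₗ
    (LinearMap.range _).toLocalizedQuotient' R' S LinearMap.id, inferInstance⟩

theorem Module.FinitePresentation.exists_isTorsion'_ker_coker_of_isLocalizedModule
    {R M N N' : Type*} [CommRing R] (S : Submonoid R) [AddCommGroup M] [Module R M]
    [Module.FinitePresentation R M] [AddCommGroup N] [Module R N] [AddCommGroup N'] [Module R N']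
    (g : N →ₗ[R] N') [IsLocalizedModule S g] (ℓ : M →ₗ[R] N') [IsLocalizedModule S ℓ] :
    ∃ F : M →ₗ[R] N,
      IsTorsion' (LinearMap.ker F) S ∧ IsTorsion' (N ⧸ LinearMap.range F) S := by
  obtain ⟨F, t, hF⟩ := Module.FinitePresentation.exists_lift_of_isLocalizedModule S g ℓ
  have hgF (x : M) : g (F x) = (t : R) • ℓ x := LinearMap.congr_fun hF x
  refine ⟨F, fun ⟨x, hx⟩ ↦ ?_, fun y ↦ ?_⟩
  · have ht := ((Module.End.isUnit_iff _).mp (IsLocalizedModule.map_units g t)).injective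
    have hℓx : ℓ x = 0 := ht <| by
      rw [Module.algebraMap_end_apply, map_zero, ← hgF, LinearMap.mem_ker.mp hx, map_zero]
    obtain ⟨s, hs⟩ := (IsLocalizedModule.eq_zero_iff S ℓ).mp hℓx
    exact ⟨s, Subtype.ext hs⟩
  · obtain ⟨y, rfl⟩ := Submodule.Quotient.mk_surjective _ y
    obtain ⟨⟨x, u⟩, hu⟩ := IsLocalizedModule.surj S ℓ (g y)
    obtain ⟨v, hv⟩ := IsLocalizedModule.exists_of_eq (S := S) (f := g)
      (x₁ := F x) (x₂ := ((t : R) * u) • y) <| by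
        rw [hgF, ← hu, Submonoid.smul_def, map_smul, mul_smul]
    refine ⟨v * t * u, (Quotient.mk_eq_zero _).mpr ⟨(v : R) • x, ?_⟩⟩
    simp only [Submonoid.smul_def] at hv
    rw [map_smul, hv, ← mul_smul, Submonoid.coe_mul, Submonoid.coe_mul, mul_assoc]

theorem exists_isLocalizedModule_linearMap_fracQuot {R : Type*} [CommRing R] [IsDomain R]
    [IsNoetherianRing R] [UniqueFactorizationMonoid R] (K : Type*) [Field K] [Algebra R K]
    [IsFractionRing R K] (M : Type*) [AddCommGroup M] [Module R M] [Module.Finite R M] {a : R}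
    (ha : a ≠ 0) (hu : ¬IsUnit a) (haM : IsTorsionBy R M a) :
    ∃ ℓ : (M →ₗ[R] K ⧸ₐ R) →ₗ[R] LocalizedModule (relPrimeSubmonoid a) M,
      IsLocalizedModule (relPrimeSubmonoid a) ℓ := by
  set S := relPrimeSubmonoid a
  have hS : S ≤ nonZeroDivisors R := fun s hs ↦ mem_nonZeroDivisors_of_ne_zero <| by
    rintro rfl
    exact hu (isRelPrime_zero_right.mp hs)
  let R' := Localization S
  have : IsDomain R' := IsLocalization.isDomain_localization hS
  have : IsPrincipalIdealRing R' := isPrincipalIdealRing_of_isLocalization_relPrimeSubmonoid ha R'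
  let : Algebra R' K :=
    IsLocalization.localizationAlgebraOfSubmonoidLe R' K S (nonZeroDivisors R) hS
  have : IsScalarTower R R' K :=
    IsLocalization.localization_isScalarTower_of_submonoid_le R' K S (nonZeroDivisors R) hS
  have : IsFractionRing R' K := IsFractionRing.isFractionRing_of_isDomain_of_isLocalization S R' K
  obtain ⟨q, hq⟩ := exists_isLocalizedModule_fracQuot S R' K
  have : Module.FinitePresentation R M := Module.finitePresentation_of_finite R M
  have hM' : IsTorsion R' (LocalizedModule S M) := fun x ↦ by
    refine ⟨⟨algebraMap R R' a, mem_nonZeroDivisors_of_ne_zero ?_⟩, ?_⟩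
    · exact (map_ne_zero_iff _ (IsLocalization.injective R' hS)).mpr ha
    · induction x using LocalizedModule.induction_on with
      | h m s => rw [Submonoid.smul_def, algebraMap_smul, LocalizedModule.smul'_mk, haM,
          LocalizedModule.zero_mk]
  obtain ⟨e⟩ := nonempty_linearMap_fracQuot_equiv_of_isTorsion K (LocalizedModule S M) hM'
  exact ⟨(e.restrictScalars R).toLinearMap ∘ₗ
    IsLocalizedModule.mapExtendScalars S (LocalizedModule.mkLinearMap S M) q R', inferInstance⟩

/-- Over a Noetherian UFD `R` with fraction field `Q`, a finitely generated torsion module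
`M` is pseudo-isomorphic to `Hom_R(M, Q/R)`. -/
theorem stmt_6 (R : Type*) [CommRing R] [IsDomain R] [IsNoetherianRing R]
    [UniqueFactorizationMonoid R]
    (M : Type*) [AddCommGroup M] [Module R M] [Module.Finite R M]
    (hM : Module.IsTorsion R M) :
    ∃ f : (M →ₗ[R] (FractionRing R ⧸ LinearMap.range (Algebra.linearMap R (FractionRing R))))
        →ₗ[R] M, IsPseudoIsom R f := by
  obtain ⟨a, ha_ann, ha_nzd⟩ := Submodule.annihilator_top_inter_nonZeroDivisors hM
  have haM : IsTorsionBy R M a := fun m ↦ mem_annihilator.mp ha_ann m mem_top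
  have ha : a ≠ 0 := nonZeroDivisors.ne_zero ha_nzd
  have haHom : IsTorsionBy R (M →ₗ[R] FractionRing R ⧸ₐ R) a := fun φ ↦ by
    ext m
    rw [LinearMap.smul_apply, ← map_smul, haM, map_zero, LinearMap.zero_apply]
  obtain ⟨F, hker, hcoker⟩ : ∃ F : (M →ₗ[R] FractionRing R ⧸ₐ R) →ₗ[R] M,
      IsTorsion' (LinearMap.ker F) (relPrimeSubmonoid a) ∧
        IsTorsion' (M ⧸ LinearMap.range F) (relPrimeSubmonoid a) := by
    by_cases hu : IsUnit a
    · exact ⟨0, fun φ ↦ ⟨⟨a, isRelPrime_self.mpr hu⟩, Subtype.ext (@haHom φ)⟩,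
        fun y ↦ ⟨⟨a, isRelPrime_self.mpr hu⟩, haM.quotient _ (x := y)⟩⟩
    · have := Module.Finite.linearMap_fracQuot_of_isTorsionBy (FractionRing R) ha haM
      have := Module.finitePresentation_of_finite R (M →ₗ[R] FractionRing R ⧸ₐ R)
      obtain ⟨ℓ, hℓ⟩ := exists_isLocalizedModule_linearMap_fracQuot (FractionRing R) M ha hu haM
      exact Module.FinitePresentation.exists_isTorsion'_ker_coker_of_isLocalizedModule _
        (LocalizedModule.mkLinearMap _ M) ℓ
  exact ⟨F, isPseudoNull_of_isTorsionBy_of_isTorsion' (fun φ ↦ Subtype.ext (@haHom φ)) hker,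
    isPseudoNull_of_isTorsionBy_of_isTorsion' (haM.quotient _) hcoker⟩
end

section
/- Let R be a (possibly noncommutative) ring with identity, let f and v be central elements of R, and set q := f · v. Assume that f^k + v^k is a unit of R for every integer k ≥ 1. Then for all integers m ≥ n ≥ 1 one has the equality of (two-sided) ideals f^m R + q^n R = f^n R + q^n R. -/
/-- Let `R` be a (possibly noncommutative) ring, `f, v` central elements, `q = f·v`, and
suppose `f^k + v^k` is a unit for all `k ≥ 1`. Then for `m ≥ n ≥ 1` one has the equality
of (two-sided) ideals `f^m R + q^n R = f^n R + q^n R`. -/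
theorem stmt_9 (R : Type*) [Ring R] (f v : R)
    (hf : ∀ r : R, f * r = r * f) (hv : ∀ r : R, v * r = r * v)
    (hu : ∀ k : ℕ, 1 ≤ k → IsUnit (f ^ k + v ^ k))
    (q : R) (hq : q = f * v)
    (m n : ℕ) (hn : 1 ≤ n) (hmn : n ≤ m) :
    {z : R | ∃ a b : R, z = f ^ m * a + q ^ n * b} =
      {z : R | ∃ a b : R, z = f ^ n * a + q ^ n * b} := by
  -- the unit u = f^n + v^n and its inverse w
  obtain ⟨hU⟩ : Nonempty (IsUnit (f ^ n + v ^ n)) := ⟨hu n hn⟩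
  set u : R := f ^ n + v ^ n with hu_def
  set w : R := ↑(hU.unit)⁻¹ with hw_def
  have huw : u * w = 1 := hU.mul_val_inv
  -- q^n = f^n * v^n
  have hfv : Commute f v := hf v
  have hqn : q ^ n = f ^ n * v ^ n := by rw [hq, hfv.mul_pow]
  have hqc : ∀ r : R, q * r = r * q := by
    intro r
    rw [hq, mul_assoc, hv r, ← mul_assoc, hf r, mul_assoc]
  have hqnc : ∀ r : R, q ^ n * r = r * q ^ n := fun r =>
    ((Commute.symm (hqc r)).pow_right n).symm
  -- key: f^m ∈ f^(m+1) R + q^n R whenever n ≤ m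
  have key : ∀ M : ℕ, n ≤ M → ∃ c d : R, f ^ M = f ^ (M + 1) * c + q ^ n * d := by
    intro M hM
    refine ⟨f ^ (n - 1) * w, f ^ (M - n) * w, ?_⟩
    have h1 : f ^ (M + 1) * (f ^ (n - 1) * w) = f ^ (M + n) * w := by
      rw [← mul_assoc, ← pow_add]
      congr 2
      omega
    have h2 : f ^ M * v ^ n = q ^ n * f ^ (M - n) := by
      have : f ^ M = f ^ (M - n) * f ^ n := by rw [← pow_add]; congr 1; omega
      rw [this, mul_assoc, ← hqn, hqnc]
    have h3 : f ^ M * u = f ^ (M + n) + q ^ n * f ^ (M - n) := by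
      rw [hu_def, mul_add, ← pow_add, h2]
    calc f ^ M = f ^ M * (u * w) := by rw [huw, mul_one]
      _ = (f ^ M * u) * w := by rw [mul_assoc]
      _ = f ^ (M + n) * w + q ^ n * (f ^ (M - n) * w) := by
          rw [h3, add_mul, mul_assoc]
      _ = f ^ (M + 1) * (f ^ (n - 1) * w) + q ^ n * (f ^ (M - n) * w) := by rw [h1]
  -- f^n ∈ f^(n+k) R + q^n R for all k
  have hfn : ∀ k : ℕ, ∃ a b : R, f ^ n = f ^ (n + k) * a + q ^ n * b := by
    intro k
    induction k with
    | zero => exact ⟨1, 0, by simp⟩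
    | succ k ih =>
        obtain ⟨a, b, hab⟩ := ih
        obtain ⟨c, d, hcd⟩ := key (n + k) (by omega)
        refine ⟨c * a, d * a + b, ?_⟩
        rw [show n + (k + 1) = n + k + 1 by omega, hab, hcd]
        noncomm_ring
  ext z
  simp only [Set.mem_setOf_eq]
  constructor
  · rintro ⟨a, b, rfl⟩
    refine ⟨f ^ (m - n) * a, b, ?_⟩
    rw [← mul_assoc, ← pow_add]
    congr 3
    omega
  · rintro ⟨a, b, rfl⟩
    obtain ⟨a', b', hab⟩ := hfn (m - n)
    refine ⟨a' * a, b' * a + b, ?_⟩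
    rw [show n + (m - n) = m by omega] at hab
    rw [hab]
    noncomm_ring
end

section
/- Let R be a compact Hausdorff topological ring, let f and v be central elements of R with q := f·v, assume f^k + v^k is a unit of R for every integer k ≥ 1, and assume ∩_{k≥1} q^k R = {0}. Then there exists a central idempotent e ∈ R such that e·R = ∩_{k≥1} f^k R and (1−e)·R = ∩_{k≥1} v^k R; in particular R decomposes as the direct sum of the two-sided ideals 𝔉 := ∩_{k≥1} f^k R and 𝔙 := ∩_{k≥1} v^k R, and 𝔉 · 𝔙 = 0. -/
/-!
Put `q = f v` and `a n = fⁿ (fⁿ + vⁿ)⁻¹`. A short computation gives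
`a (n+1) - a n = qⁿ (f - v) (fⁿ + vⁿ)⁻¹ (fⁿ⁺¹ + vⁿ⁺¹)⁻¹`, so `(a n)` is `q`-adically Cauchy.
In a compact Hausdorff ring the ideals `qⁿ R` are closed, so the cosets `a n + qⁿ R` form a
nested sequence of nonempty compact sets, and any `e` in their intersection is a `q`-adic
limit of `(a n)`. Since `fⁿ ∣ a n` and `vⁿ ∣ 1 - a n`, we get `e ∈ 𝔉` and `1 - e ∈ 𝔙`;
`e` is central because each `a n` is. As `𝔉 𝔙 ⊆ ⋂ qᵏ R = 0`, the element `e` is an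
idempotent splitting `R` into `𝔉 ⊕ 𝔙`. The computations with `(fⁿ + vⁿ)⁻¹` take place in
the commutative ring `Subring.center R`.
-/

section Monoid

variable {M : Type*} [Monoid M]

def divisibleByPowers (a : M) : Set M := {z | ∀ k, 1 ≤ k → a ^ k ∣ z}

theorem mem_divisibleByPowers_iff {a z : M} : z ∈ divisibleByPowers a ↔ ∀ k, a ^ k ∣ z :=
  ⟨fun h k => k.eq_zero_or_pos.elim (fun hk => hk ▸ (pow_zero a).symm ▸ one_dvd z) (h k),
    fun h k _ => h k⟩

theorem mul_mem_divisibleByPowers {a z : M} (hz : z ∈ divisibleByPowers a) (r : M) :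
    z * r ∈ divisibleByPowers a :=
  fun k hk => (hz k hk).mul_right r

theorem mul_mem_divisibleByPowers_mul {a b x y : M} (hb : ∀ r, Commute b r)
    (hx : x ∈ divisibleByPowers a) (hy : y ∈ divisibleByPowers b) :
    x * y ∈ divisibleByPowers (a * b) := by
  intro k hk
  obtain ⟨r, rfl⟩ := hx k hk
  obtain ⟨s, rfl⟩ := hy k hk
  refine ⟨r * s, ?_⟩
  rw [(hb a).symm.mul_pow, mul_assoc, ← mul_assoc r, ← ((hb r).pow_left k).eq]
  simp only [mul_assoc]

end Monoid

section Ring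

variable {R : Type*} [Ring R]

theorem setOf_dvd_eq_of_mem_of_one_sub_mem {I J : Set R} {e : R}
    (hI : ∀ x ∈ I, ∀ r, x * r ∈ I) (hJI : ∀ y ∈ J, ∀ x ∈ I, y * x = 0)
    (he : e ∈ I) (he' : 1 - e ∈ J) : {z | e ∣ z} = I := by
  ext z
  refine ⟨fun ⟨r, hr⟩ => hr ▸ hI e he r, fun hz => ⟨z, ?_⟩⟩
  have h := hJI _ he' z hz
  rwa [sub_mul, one_mul, sub_eq_zero] at h

theorem isUnit_center_of_isUnit_val {x : Subring.center R} (hx : IsUnit (x : R)) : IsUnit x := by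
  obtain ⟨u, hu⟩ := hx
  have hinv : (↑u⁻¹ : R) ∈ Subring.center R := Set.units_inv_mem_center (hu ▸ x.2)
  exact ⟨⟨x, ⟨_, hinv⟩, Subtype.ext (by simp [← hu]), Subtype.ext (by simp [← hu])⟩, rfl⟩

end Ring

section CommRing

variable {S : Type*} [CommRing S] {f v : S} {n : ℕ}

theorem pow_mul_inverse_succ_sub_dvd (hs : IsUnit (f ^ n + v ^ n))
    (hs' : IsUnit (f ^ (n + 1) + v ^ (n + 1))) :
    (f * v) ^ n ∣ f ^ (n + 1) * Ring.inverse (f ^ (n + 1) + v ^ (n + 1)) -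
      f ^ n * Ring.inverse (f ^ n + v ^ n) := by
  set w := Ring.inverse (f ^ n + v ^ n)
  set w' := Ring.inverse (f ^ (n + 1) + v ^ (n + 1))
  have h : (f ^ n + v ^ n) * w = 1 := Ring.mul_inverse_cancel _ hs
  have h' : (f ^ (n + 1) + v ^ (n + 1)) * w' = 1 := Ring.mul_inverse_cancel _ hs'
  exact ⟨(f - v) * w * w', by linear_combination (-f ^ (n + 1) * w') * h + f ^ n * w * h'⟩

theorem pow_dvd_one_sub_pow_mul_inverse (hs : IsUnit (f ^ n + v ^ n)) :
    v ^ n ∣ 1 - f ^ n * Ring.inverse (f ^ n + v ^ n) :=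
  ⟨Ring.inverse (f ^ n + v ^ n), by linear_combination -Ring.mul_inverse_cancel _ hs⟩

end CommRing

section Central

variable {R : Type*} [Ring R] {f v : R}

theorem exists_central_cauchy_seq (hf : ∀ r, Commute f r) (hv : ∀ r, Commute v r)
    (hu : ∀ n, 1 ≤ n → IsUnit (f ^ n + v ^ n)) :
    ∃ a : ℕ → R, (∀ n r, Commute (a n) r) ∧ (∀ n, (f * v) ^ n ∣ a (n + 1) - a n) ∧
      (∀ n, f ^ n ∣ a n) ∧ (∀ n, 1 ≤ n → v ^ n ∣ 1 - a n) := by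
  set C := Subring.center R
  let F : C := ⟨f, Subring.mem_center_iff.mpr fun g => (hf g).symm⟩
  let V : C := ⟨v, Subring.mem_center_iff.mpr fun g => (hv g).symm⟩
  have hU : ∀ n, 1 ≤ n → IsUnit (F ^ n + V ^ n) := fun n hn =>
    isUnit_center_of_isUnit_val (by simpa [F, V] using hu n hn)
  refine ⟨fun n => (F ^ n * Ring.inverse (F ^ n + V ^ n) : C),
    fun n r => (Subring.mem_center_iff.mp (F ^ n * Ring.inverse (F ^ n + V ^ n)).2 r).symm,
    fun n => ?_, fun n => ?_, fun n hn => ?_⟩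
  · rcases n with _ | n
    · simp
    · simpa [F, V] using map_dvd C.subtype
        (pow_mul_inverse_succ_sub_dvd (hU _ n.succ_pos) (hU _ (n + 1).succ_pos))
  · simp [F]
  · simpa [F, V] using map_dvd C.subtype (pow_dvd_one_sub_pow_mul_inverse (hU n hn))

end Central

section Compact

variable {R : Type*} [Ring R] [TopologicalSpace R] [IsTopologicalRing R] [CompactSpace R]
  [T2Space R]

theorem isClosed_setOf_dvd (a : R) : IsClosed {x | a ∣ x} := by
  have h : {x | a ∣ x} = Set.range (a * ·) := by
    ext x
    exact ⟨fun ⟨r, hr⟩ => ⟨r, hr.symm⟩, fun ⟨r, hr⟩ => ⟨r, hr.symm⟩⟩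
  rw [h]
  exact (isCompact_range (continuous_const_mul a)).isClosed

theorem exists_forall_pow_dvd_sub (q : R) (a : ℕ → R) (ha : ∀ n, q ^ n ∣ a (n + 1) - a n) :
    ∃ e, ∀ n, q ^ n ∣ e - a n := by
  let S : ℕ → Set R := fun n => {x | q ^ n ∣ x - a n}
  have hclosed : ∀ n, IsClosed (S n) := fun n =>
    (isClosed_setOf_dvd (q ^ n)).preimage (continuous_sub_right (a n))
  have hnested : ∀ n, S (n + 1) ⊆ S n := fun n x (hx : q ^ (n + 1) ∣ x - a (n + 1)) => by
    have hx' := (pow_dvd_pow q n.le_succ).trans hx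
    show q ^ n ∣ x - a n
    simpa using dvd_add hx' (ha n)
  have hnonempty : ∀ n, (S n).Nonempty := fun n => ⟨a n, by simp [S]⟩
  obtain ⟨e, he⟩ := IsCompact.nonempty_iInter_of_sequence_nonempty_isCompact_isClosed S
    hnested hnonempty (hclosed 0).isCompact hclosed
  exact ⟨e, Set.mem_iInter.mp he⟩

theorem exists_central_mem_divisibleByPowers {f v : R} (hf : ∀ r, Commute f r)
    (hv : ∀ r, Commute v r) (hu : ∀ n, 1 ≤ n → IsUnit (f ^ n + v ^ n))
    (hq : ∀ z ∈ divisibleByPowers (f * v), z = 0) :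
    ∃ e : R, (∀ r, Commute e r) ∧ e ∈ divisibleByPowers f ∧ 1 - e ∈ divisibleByPowers v := by
  obtain ⟨a, ha_comm, ha_cauchy, hfa, hva⟩ := exists_central_cauchy_seq hf hv hu
  obtain ⟨e, he⟩ := exists_forall_pow_dvd_sub (f * v) a ha_cauchy
  have hfq : ∀ n, f ^ n ∣ (f * v) ^ n := fun n => ⟨v ^ n, (hf v).mul_pow n⟩
  have hvq : ∀ n, v ^ n ∣ (f * v) ^ n := fun n => ⟨f ^ n, by rw [(hf v).eq, (hv f).mul_pow]⟩
  refine ⟨e, fun r => ?_, fun k _ => ?_, fun k hk => ?_⟩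
  · refine sub_eq_zero.mp (hq _ (mem_divisibleByPowers_iff.mpr fun n => ?_))
    obtain ⟨s, hs⟩ := he n
    have hqr : Commute ((f * v) ^ n) r := ((hf r).mul_left (hv r)).pow_left n
    calc (f * v) ^ n ∣ (f * v) ^ n * (s * r - r * s) := dvd_mul_right _ _
      _ = (e - a n) * r - r * (e - a n) := by
        rw [hs, mul_sub, ← mul_assoc, ← mul_assoc, hqr.eq, mul_assoc, mul_assoc]
      _ = e * r - r * e := by rw [sub_mul, mul_sub, (ha_comm n r).eq]; abel
  · simpa using dvd_add ((hfq k).trans (he k)) (hfa k)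
  · simpa using dvd_sub (hva k hk) ((hvq k).trans (he k))

end Compact

/-- Let `R` be a compact Hausdorff topological ring, `f, v` central elements with
`q = f·v`, suppose `f^k + v^k` is a unit for all `k ≥ 1` and `⋂_{k≥1} q^k R = 0`.
Then there is a central idempotent `e` with `e·R = ⋂_{k≥1} f^k R =: 𝔉` and
`(1-e)·R = ⋂_{k≥1} v^k R =: 𝔙`; in particular `R = 𝔉 ⊕ 𝔙` (every element is a sum of an
element of `𝔉` and one of `𝔙`) and `𝔉 · 𝔙 = 0`. -/
theorem stmt_10 (R : Type*) [Ring R] [TopologicalSpace R] [IsTopologicalRing R]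
    [CompactSpace R] [T2Space R]
    (f v : R) (hf : ∀ r : R, f * r = r * f) (hv : ∀ r : R, v * r = r * v)
    (hu : ∀ k : ℕ, 1 ≤ k → IsUnit (f ^ k + v ^ k))
    (hq : ∀ z : R, (∀ k : ℕ, 1 ≤ k → ∃ r : R, z = (f * v) ^ k * r) → z = 0) :
    ∃ e : R, e * e = e ∧ (∀ r : R, e * r = r * e) ∧
      ({z : R | ∃ r : R, z = e * r} = {z : R | ∀ k : ℕ, 1 ≤ k → ∃ r : R, z = f ^ k * r}) ∧
      ({z : R | ∃ r : R, z = (1 - e) * r} =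
        {z : R | ∀ k : ℕ, 1 ≤ k → ∃ r : R, z = v ^ k * r}) ∧
      -- `R` is the (direct) sum of the two ideals `𝔉` and `𝔙`
      (∀ z : R, ∃ x y : R, (∀ k : ℕ, 1 ≤ k → ∃ r : R, x = f ^ k * r) ∧
        (∀ k : ℕ, 1 ≤ k → ∃ r : R, y = v ^ k * r) ∧ z = x + y) ∧
      -- `𝔉 · 𝔙 = 0`
      (∀ x y : R, (∀ k : ℕ, 1 ≤ k → ∃ r : R, x = f ^ k * r) →
        (∀ k : ℕ, 1 ≤ k → ∃ r : R, y = v ^ k * r) → x * y = 0) := by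
  obtain ⟨e, he_comm, heF, heV⟩ := exists_central_mem_divisibleByPowers hf hv hu hq
  have hFV : ∀ x ∈ divisibleByPowers f, ∀ y ∈ divisibleByPowers v, x * y = 0 :=
    fun x hx y hy => hq _ (mul_mem_divisibleByPowers_mul hv hx hy)
  have hVF : ∀ y ∈ divisibleByPowers v, ∀ x ∈ divisibleByPowers f, y * x = 0 :=
    fun y hy x hx => hq _ (hf v ▸ mul_mem_divisibleByPowers_mul hf hy hx)
  have he_idem : e * e = e := by
    have h := hFV e heF (1 - e) heV
    rwa [mul_sub, mul_one, sub_eq_zero, eq_comm] at h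
  have hideal : ∀ a : R, ∀ x ∈ divisibleByPowers a, ∀ r, x * r ∈ divisibleByPowers a :=
    fun _ _ hx => mul_mem_divisibleByPowers hx
  refine ⟨e, he_idem, he_comm,
    setOf_dvd_eq_of_mem_of_one_sub_mem (hideal f) hVF heF (by simpa using heV),
    setOf_dvd_eq_of_mem_of_one_sub_mem (hideal v) hFV heV (by simpa using heF),
    fun z => ⟨e * z, (1 - e) * z, mul_mem_divisibleByPowers heF z,
      mul_mem_divisibleByPowers heV z, by noncomm_ring⟩,
    fun x y hx hy => hFV x hx y hy⟩
end

section
/- Let p be a prime, let d ≥ 2, let i ≠ j be two indices in {1, …, d}, and let f, g ∈ ℤ_p[X] be monic polynomials of positive degree with coefficients in the p-adic integers. Then the elements f(X_i) and g(X_j) of the formal power series ring ℤ_p⟦X₁, …, X_d⟧ have no common divisor that is a non-unit: any element of ℤ_p⟦X₁, …, X_d⟧ dividing both f(X_i) and g(X_j) is a unit. -/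
/-!
Reduce modulo the maximal ideal: a power series over a local ring is a unit as soon as its image
over the residue field is, and monic polynomials stay nonzero there. Over a field (indeed any
domain) the lexicographic order `lexOrder` is additive on products, and every monomial of
`f(Xᵢ)` is a power of `Xᵢ`; so a divisor of `f(Xᵢ)` has its lex-leading exponent supported on
`{i}`, and a common divisor of `f(Xᵢ)` and `g(Xⱼ)` has leading exponent `0`, i.e. a nonzero
constant coefficient.
-/

open scoped Polynomial

namespace MvPowerSeries

variable {σ R : Type*} [CommRing R]

theorem coeff_aeval_X [DecidableEq σ] (q : R[X]) (k : σ) (n : σ →₀ ℕ) :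
    coeff n (Polynomial.aeval (X k : MvPowerSeries σ R) q) =
      if n = Finsupp.single k (n k) then q.coeff (n k) else 0 := by
  induction q using Polynomial.induction_on' with
  | add p q hp hq => rw [map_add, map_add, hp, hq, Polynomial.coeff_add, ite_add_zero]
  | monomial m a =>
    rw [Polynomial.aeval_monomial, algebraMap_apply, Algebra.algebraMap_self_apply, coeff_C_mul,
      coeff_X_pow, Polynomial.coeff_monomial]
    by_cases hn : n = Finsupp.single k m
    · subst hn; simp
    · rw [if_neg hn, mul_zero]
      split_ifs with hsingle hm
      · exact absurd (hm ▸ hsingle) hn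
      all_goals rfl

theorem aeval_X_ne_zero {q : R[X]} (hq : q ≠ 0) (k : σ) :
    Polynomial.aeval (X k : MvPowerSeries σ R) q ≠ 0 := by
  classical
  intro h0
  apply Polynomial.leadingCoeff_ne_zero.mpr hq
  simpa [h0] using (coeff_aeval_X q k (Finsupp.single k q.natDegree)).symm

theorem map_aeval_X {S : Type*} [CommRing S] (ψ : R →+* S) (q : R[X]) (k : σ) :
    map ψ (Polynomial.aeval (X k : MvPowerSeries σ R) q) =
      Polynomial.aeval (X k : MvPowerSeries σ S) (q.map ψ) := by
  rw [Polynomial.map_aeval_eq_aeval_map (φ := ψ) ?_ q, map_X]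
  ext
  simp [algebraMap_apply]

theorem exists_lexOrder_eq_single_of_dvd_aeval_X [LinearOrder σ] [WellFoundedGT σ]
    [NoZeroDivisors R] {φ : MvPowerSeries σ R} {q : R[X]} (hq : q ≠ 0) {k : σ}
    (h : φ ∣ Polynomial.aeval (X k) q) : ∃ n : ℕ, lexOrder φ = toLex (Finsupp.single k n) := by
  classical
  obtain ⟨ψ, hψ⟩ := h
  have hq' := aeval_X_ne_zero hq k
  obtain ⟨u, hu⟩ := exists_finsupp_eq_lexOrder_of_ne_zero (left_ne_zero_of_mul (hψ ▸ hq'))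
  obtain ⟨v, hv⟩ := exists_finsupp_eq_lexOrder_of_ne_zero (right_ne_zero_of_mul (hψ ▸ hq'))
  obtain ⟨w, hw⟩ := exists_finsupp_eq_lexOrder_of_ne_zero hq'
  have hw_single : w.support ⊆ {k} := by
    have := coeff_ne_zero_of_lexOrder hw.symm
    rw [coeff_aeval_X] at this
    exact Finsupp.support_subset_singleton.mpr (of_not_not fun hne => this (if_neg hne))
  have huvw : u + v = w := by
    have := lexOrder_mul φ ψ
    rw [← hψ, hu, hv, hw, ← WithTop.coe_add, WithTop.coe_eq_coe, ← toLex_add] at this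
    exact (toLex.injective this).symm
  have hu_single : u.support ⊆ {k} :=
    (Finsupp.support_mono (huvw ▸ le_self_add)).trans hw_single
  obtain ⟨n, rfl⟩ := Finsupp.support_subset_singleton'.mp hu_single
  exact ⟨n, hu⟩

theorem isUnit_of_dvd_aeval_X_of_dvd_aeval_X {K : Type*} [Field K] {i j : σ} (hij : i ≠ j)
    {f g : K[X]} (hf : f ≠ 0) (hg : g ≠ 0) {φ : MvPowerSeries σ K}
    (hφf : φ ∣ Polynomial.aeval (X i) f) (hφg : φ ∣ Polynomial.aeval (X j) g) : IsUnit φ := by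
  obtain ⟨_, _⟩ := exists_wellFoundedGT σ
  obtain ⟨m, hm⟩ := exists_lexOrder_eq_single_of_dvd_aeval_X hf hφf
  obtain ⟨n, hn⟩ := exists_lexOrder_eq_single_of_dvd_aeval_X hg hφg
  have hm0 : m = 0 := by
    rw [hm, WithTop.coe_eq_coe, toLex_inj, Finsupp.single_eq_single_iff] at hn
    tauto
  rw [isUnit_iff_constantCoeff, isUnit_iff_ne_zero, ← coeff_zero_eq_constantCoeff_apply]
  exact coeff_ne_zero_of_lexOrder (by rw [hm, hm0, Finsupp.single_zero])

theorem isUnit_of_dvd_aeval_X_of_dvd_aeval_X_of_monic [IsLocalRing R] {i j : σ} (hij : i ≠ j)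
    {f g : R[X]} (hf : f.Monic) (hg : g.Monic) {φ : MvPowerSeries σ R}
    (hφf : φ ∣ Polynomial.aeval (X i) f) (hφg : φ ∣ Polynomial.aeval (X j) g) : IsUnit φ := by
  let π := IsLocalRing.residue R
  rw [← isUnit_map_iff (map π)]
  refine isUnit_of_dvd_aeval_X_of_dvd_aeval_X hij (hf.map π).ne_zero (hg.map π).ne_zero ?_ ?_
  · simpa only [map_aeval_X] using map_dvd (map π) hφf
  · simpa only [map_aeval_X] using map_dvd (map π) hφg

end MvPowerSeries

theorem stmt_11_general (p : ℕ) [Fact p.Prime] (d : ℕ) (i j : Fin d) (hij : i ≠ j)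
    (f g : Polynomial ℤ_[p]) (hf : f.Monic) (hg : g.Monic) :
    ∀ h : MvPowerSeries (Fin d) ℤ_[p],
      h ∣ Polynomial.aeval (MvPowerSeries.X i) f →
      h ∣ Polynomial.aeval (MvPowerSeries.X j) g → IsUnit h :=
  fun _ => MvPowerSeries.isUnit_of_dvd_aeval_X_of_dvd_aeval_X_of_monic hij hf hg

/-- Let `p` be a prime, `d ≥ 2`, `i ≠ j` indices, and `f, g ∈ ℤ_p[X]` monic polynomials of
positive degree. Then in `ℤ_p⟦X₁, …, X_d⟧` the elements `f(Xᵢ)` and `g(Xⱼ)` have no common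
non-unit divisor. -/
theorem stmt_11 (p : ℕ) [Fact p.Prime] (d : ℕ) (hd : 2 ≤ d) (i j : Fin d) (hij : i ≠ j)
    (f g : Polynomial ℤ_[p]) (hf : f.Monic) (hg : g.Monic)
    (hfdeg : 0 < f.natDegree) (hgdeg : 0 < g.natDegree) :
    ∀ h : MvPowerSeries (Fin d) ℤ_[p],
      h ∣ Polynomial.aeval (MvPowerSeries.X i) f →
      h ∣ Polynomial.aeval (MvPowerSeries.X j) g → IsUnit h :=
  stmt_11_general p d i j hij f g hf hg
end

section
/- Let Λ := ℤ_p⟦T⟧. For a Λ-module M let g_M : M[T] → M/TM denote the composition of the inclusion of the T-torsion submodule M[T] into M with the projection M → M/TM; say M has finite generalized Euler characteristic if the kernel and cokernel of g_M are finite, and in that case set char(M) := |coker g_M| / |ker g_M|. Let M and N be finitely generated torsion Λ-modules and let f : M → N be a Λ-linear map with finite kernel and finite cokernel. Then M has finite generalized Euler characteristic if and only if N does, and in that case char(M) = char(N). -/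
set_option synthInstance.maxHeartbeats 1000000
set_option maxHeartbeats 1000000

open PowerSeries

/-- The submodule `T·M` of a module `M` over `Λ = ℤ_p⟦T⟧`. -/
noncomputable def TM (p : ℕ) [Fact p.Prime] (M : Type*) [AddCommGroup M]
    [Module (PowerSeries ℤ_[p]) M] : Submodule (PowerSeries ℤ_[p]) M :=
  Ideal.span ({PowerSeries.X} : Set (PowerSeries ℤ_[p])) •
    (⊤ : Submodule (PowerSeries ℤ_[p]) M)

/-- The natural map `g_M : M[T] → M/TM`, the composition of the inclusion of the
`T`-torsion submodule with the projection onto the `T`-coinvariants. -/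
noncomputable def gMap (p : ℕ) [Fact p.Prime] (M : Type*) [AddCommGroup M]
    [Module (PowerSeries ℤ_[p]) M] :
    (Submodule.torsionBy (PowerSeries ℤ_[p]) M PowerSeries.X) →ₗ[PowerSeries ℤ_[p]]
      (M ⧸ TM p M) :=
  (TM p M).mkQ ∘ₗ (Submodule.torsionBy (PowerSeries ℤ_[p]) M PowerSeries.X).subtype

/-- `M` has finite generalized Euler characteristic if `g_M` has finite kernel and
cokernel. -/
def HasFiniteEuler (p : ℕ) [Fact p.Prime] (M : Type*) [AddCommGroup M]
    [Module (PowerSeries ℤ_[p]) M] : Prop :=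
  Finite (LinearMap.ker (gMap p M)) ∧
    Finite ((M ⧸ TM p M) ⧸ LinearMap.range (gMap p M))

/-- The generalized Euler characteristic `char(M) = |coker g_M| / |ker g_M|`. -/
noncomputable def eulerChar (p : ℕ) [Fact p.Prime] (M : Type*) [AddCommGroup M]
    [Module (PowerSeries ℤ_[p]) M] : ℚ :=
  (Nat.card ((M ⧸ TM p M) ⧸ LinearMap.range (gMap p M)) : ℚ) /
    (Nat.card (LinearMap.ker (gMap p M)) : ℚ)

/-!
Let `K(f) : M[T] → N[T]` and `Q(f) : M/TM → N/TN` be the maps induced by `f`, so that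
`Q(f) ∘ g_M = g_N ∘ K(f)`. The ratio `|coker| / |ker|` is multiplicative on composites of maps
with finite kernel and cokernel, and two out of three such composites determine the third
(kernel–cokernel exact sequence). It therefore suffices that `K(f)` and `Q(f)` have finite kernel
and cokernel and the same ratio. Factoring `f` through its image reduces this to an injection with
finite cokernel `C` and a surjection with finite kernel `A`. For a short exact sequence
`0 → A → B → C → 0` the snake lemma for multiplication by `T` gives the exact sequence
`0 → A[T] → B[T] → C[T] → A/TA → B/TB → C/TC → 0`, and the ratios agree because
`|X[T]| = |X/TX|` for a finite module `X`.
-/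

open Function LinearMap Submodule
open scoped Pointwise

section Counting

variable {R : Type*} [Ring R] {X Y Z : Type*} [AddCommGroup X] [AddCommGroup Y] [AddCommGroup Z]
  [Module R X] [Module R Y] [Module R Z] {f : X →ₗ[R] Y} {g : Y →ₗ[R] Z}

lemma Function.Exact.card_quotient_range_eq_card_range (h : Exact f g) :
    Nat.card (Y ⧸ range f) = Nat.card (range g) := by
  rw [← exact_iff.mp h]
  exact Nat.card_congr g.quotKerEquivRange.toEquiv

lemma Function.Exact.card_eq_card_range_mul_card_range (h : Exact f g) :
    Nat.card Y = Nat.card (range f) * Nat.card (range g) := by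
  rw [card_eq_card_quotient_mul_card (range f), h.card_quotient_range_eq_card_range, mul_comm]

lemma LinearMap.card_range_of_injective (hf : Injective f) : Nat.card (range f) = Nat.card X :=
  Nat.card_congr (LinearEquiv.ofInjective f hf).toEquiv.symm

lemma LinearMap.card_range_of_surjective (hf : Surjective f) : Nat.card (range f) = Nat.card Y := by
  rw [range_eq_top.mpr hf]
  exact Nat.card_congr (Equiv.Set.univ Y)

end Counting

namespace LinearMap

variable {R : Type*} [Ring R] {X Y Z : Type*} [AddCommGroup X] [AddCommGroup Y] [AddCommGroup Z]
  [Module R X] [Module R Y] [Module R Z]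

def HasFiniteKerCoker (u : X →ₗ[R] Y) : Prop :=
  Finite (ker u) ∧ Finite (Y ⧸ range u)

noncomputable def mulIndex (u : X →ₗ[R] Y) : ℚ :=
  Nat.card (Y ⧸ range u) / Nat.card (ker u)

lemma hasFiniteKerCoker_iff (u : X →ₗ[R] Y) :
    u.HasFiniteKerCoker ↔ Nat.card (ker u) ≠ 0 ∧ Nat.card (Y ⧸ range u) ≠ 0 := by
  simp only [HasFiniteKerCoker, Nat.card_ne_zero]
  exact ⟨fun ⟨h₁, h₂⟩ ↦ ⟨⟨inferInstance, h₁⟩, inferInstance, h₂⟩, fun ⟨h₁, h₂⟩ ↦ ⟨h₁.2, h₂.2⟩⟩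

/-- The counting form of the exact sequence
`0 → ker b → ker (a ∘ b) → ker a → coker b → coker (a ∘ b) → coker a → 0`. -/
lemma exists_card_ker_comp_card_coker_comp (b : X →ₗ[R] Y) (a : Y →ₗ[R] Z) :
    ∃ i j q : ℕ, Nat.card (ker (a ∘ₗ b)) = Nat.card (ker b) * i ∧ Nat.card (ker a) = i * j ∧
      Nat.card (Y ⧸ range b) = j * q ∧
      Nat.card (Z ⧸ range (a ∘ₗ b)) = q * Nat.card (Z ⧸ range a) := by
  have hle : range b ≤ comap a (range (a ∘ₗ b)) := by rw [← map_le_iff_le_comap, range_comp]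
  let f₀ : ker b →ₗ[R] ker (a ∘ₗ b) := inclusion (ker_le_ker_comp b a)
  let f₁ : ker (a ∘ₗ b) →ₗ[R] ker a := b.restrict fun x hx ↦ by simpa using hx
  let f₂ : ker a →ₗ[R] Y ⧸ range b := (range b).mkQ ∘ₗ (ker a).subtype
  let f₃ : (Y ⧸ range b) →ₗ[R] Z ⧸ range (a ∘ₗ b) := (range b).mapQ _ a hle
  let f₄ : (Z ⧸ range (a ∘ₗ b)) →ₗ[R] Z ⧸ range a := factor (range_comp_le_range b a)
  have h₁ : Exact f₀ f₁ := by rw [exact_iff]; simp [f₀, f₁, ker_restrict, range_inclusion]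
  have h₂ : Exact f₁ f₂ := by
    rintro ⟨y, hy⟩
    simp only [f₂, comp_apply, coe_subtype, mkQ_apply, Quotient.mk_eq_zero]
    exact ⟨fun ⟨x, hx⟩ ↦ ⟨⟨x, by simpa [hx] using hy⟩, Subtype.ext hx⟩,
      fun ⟨x, hx⟩ ↦ ⟨x, congrArg Subtype.val hx⟩⟩
  have h₃ : Exact f₂ f₃ := by rw [exact_iff]; simp [f₂, f₃, range_comp, ker_mapQ, comap_map_eq]
  have h₄ : Exact f₃ f₄ := by rw [exact_iff]; simp [f₃, f₄, factor, ker_mapQ, range_mapQ]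
  refine ⟨Nat.card (range f₁), Nat.card (range f₂), Nat.card (range f₃), ?_, ?_, ?_, ?_⟩
  · rw [h₁.card_eq_card_range_mul_card_range, card_range_of_injective (inclusion_injective _)]
  · exact h₂.card_eq_card_range_mul_card_range
  · exact h₃.card_eq_card_range_mul_card_range
  · rw [h₄.card_eq_card_range_mul_card_range, card_range_of_surjective (factor_surjective _)]

lemma hasFiniteKerCoker_comp_iff_left {b : X →ₗ[R] Y} (hb : b.HasFiniteKerCoker) {a : Y →ₗ[R] Z} :
    (a ∘ₗ b).HasFiniteKerCoker ↔ a.HasFiniteKerCoker := by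
  obtain ⟨i, j, q, h₁, h₂, h₃, h₄⟩ := exists_card_ker_comp_card_coker_comp b a
  simp only [hasFiniteKerCoker_iff, h₁, h₂, h₃, h₄, mul_ne_zero_iff] at hb ⊢
  tauto

lemma hasFiniteKerCoker_comp_iff_right {a : Y →ₗ[R] Z} (ha : a.HasFiniteKerCoker) {b : X →ₗ[R] Y} :
    (a ∘ₗ b).HasFiniteKerCoker ↔ b.HasFiniteKerCoker := by
  obtain ⟨i, j, q, h₁, h₂, h₃, h₄⟩ := exists_card_ker_comp_card_coker_comp b a
  simp only [hasFiniteKerCoker_iff, h₁, h₂, h₃, h₄, mul_ne_zero_iff] at ha ⊢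
  tauto

lemma HasFiniteKerCoker.mulIndex_ne_zero {u : X →ₗ[R] Y} (hu : u.HasFiniteKerCoker) :
    u.mulIndex ≠ 0 := by
  rw [hasFiniteKerCoker_iff] at hu
  simp only [mulIndex, ne_eq, div_eq_zero_iff, Nat.cast_eq_zero]
  tauto

lemma mulIndex_comp {a : Y →ₗ[R] Z} (ha : a.HasFiniteKerCoker) {b : X →ₗ[R] Y}
    (hb : b.HasFiniteKerCoker) : (a ∘ₗ b).mulIndex = a.mulIndex * b.mulIndex := by
  obtain ⟨i, j, q, h₁, h₂, h₃, h₄⟩ := exists_card_ker_comp_card_coker_comp b a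
  simp only [hasFiniteKerCoker_iff, h₂, mul_ne_zero_iff] at ha hb
  simp only [mulIndex, h₁, h₂, h₃, h₄]
  have : (i : ℚ) ≠ 0 := by exact_mod_cast ha.1.1
  have : (j : ℚ) ≠ 0 := by exact_mod_cast ha.1.2
  have : (Nat.card (ker b) : ℚ) ≠ 0 := by exact_mod_cast hb.1
  push_cast
  field_simp

end LinearMap

namespace Submodule

variable {R : Type*} [CommRing R] (t : R) {M N P : Type*} [AddCommGroup M] [Module R M]
  [AddCommGroup N] [Module R N] [AddCommGroup P] [Module R P]

def torsionByMap (u : M →ₗ[R] N) : torsionBy R M t →ₗ[R] torsionBy R N t :=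
  u.restrict fun x hx ↦ by rw [mem_torsionBy_iff] at hx ⊢; rw [← map_smul, hx, map_zero]

variable (M) in
def torsionByToQuotSMulTop : torsionBy R M t →ₗ[R] QuotSMulTop t M :=
  (t • ⊤ : Submodule R M).mkQ ∘ₗ (torsionBy R M t).subtype

lemma torsionByMap_comp (v : N →ₗ[R] P) (u : M →ₗ[R] N) :
    torsionByMap t (v ∘ₗ u) = torsionByMap t v ∘ₗ torsionByMap t u := rfl

lemma quotSMulTopMap_comp_torsionByToQuotSMulTop (u : M →ₗ[R] N) :
    QuotSMulTop.map t u ∘ₗ torsionByToQuotSMulTop t M =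
      torsionByToQuotSMulTop t N ∘ₗ torsionByMap t u := rfl

lemma torsionByMap_injective {u : M →ₗ[R] N} (hu : Injective u) :
    Injective (torsionByMap t u) :=
  fun _ _ hxy ↦ Subtype.ext (hu (congrArg Subtype.val hxy))

lemma exact_torsionByMap {i : M →ₗ[R] N} {p : N →ₗ[R] P} (hi : Injective i) (h : Exact i p) :
    Exact (torsionByMap t i) (torsionByMap t p) := by
  rintro ⟨y, hy⟩
  refine ⟨fun hpy ↦ ?_, ?_⟩
  · obtain ⟨x, rfl⟩ := (h y).mp (congrArg Subtype.val hpy)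
    have hx : t • x = 0 := hi (by rw [map_smul, map_zero]; exact hy)
    exact ⟨⟨x, hx⟩, rfl⟩
  · rintro ⟨x, hx⟩
    rw [← hx]
    exact Subtype.ext (h.apply_apply_eq_zero (x : M))

variable (M)

lemma range_toLinearMap_eq_smul_top :
    range (DistribSMul.toLinearMap R M t) = t • ⊤ := by
  rw [← map_top]; rfl

lemma exact_toLinearMap_mkQ_smul_top :
    Exact (DistribSMul.toLinearMap R M t) (t • ⊤ : Submodule R M).mkQ := by
  rw [← range_toLinearMap_eq_smul_top]
  exact exact_map_mkQ_range _

lemma card_torsionBy_eq_card_quotSMulTop [Finite M] :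
    Nat.card (torsionBy R M t) = Nat.card (QuotSMulTop t M) := by
  have h₁ :=
    (exact_subtype_ker_map (DistribSMul.toLinearMap R M t)).card_eq_card_range_mul_card_range
  have h₂ := (exact_toLinearMap_mkQ_smul_top t M).card_eq_card_range_mul_card_range
  rw [card_range_of_injective (subtype_injective _)] at h₁
  rw [card_range_of_surjective (mkQ_surjective _), h₁, mul_comm] at h₂
  exact Nat.eq_of_mul_eq_mul_left Nat.card_pos h₂

variable {M}

lemma comp_toLinearMap_eq (u : M →ₗ[R] N) :
    u ∘ₗ DistribSMul.toLinearMap R M t = DistribSMul.toLinearMap R N t ∘ₗ u :=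
  LinearMap.ext fun x ↦ map_smul u t x

lemma _root_.Function.Exact.exists_torsionBy_connecting {i : M →ₗ[R] N} {p : N →ₗ[R] P}
    (hi : Injective i) (hp : Surjective p) (h : Exact i p) :
    ∃ δ : torsionBy R P t →ₗ[R] QuotSMulTop t M,
      Exact (torsionByMap t p) δ ∧ Exact δ (QuotSMulTop.map t i) := by
  have hi' := comp_toLinearMap_eq t i
  have hp' := comp_toLinearMap_eq t p
  have hP := exact_subtype_ker_map (DistribSMul.toLinearMap R P t)
  have hM := exact_toLinearMap_mkQ_smul_top t M
  refine ⟨SnakeLemma.δ' _ _ _ i p h i p h hi' hp' _ hP _ hM hp hi, ?_, ?_⟩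
  · exact SnakeLemma.exact_δ'_right _ _ _ i p h i p h hi' hp' _ (exact_subtype_ker_map _) _ hP _ hM
      hp hi (torsionByMap t p) rfl (subtype_injective _)
  · exact SnakeLemma.exact_δ'_left _ _ _ i p h i p h hi' hp' _ hP _ hM _
      (exact_toLinearMap_mkQ_smul_top t N) hp hi (QuotSMulTop.map t i) rfl (mkQ_surjective _)

variable {t}

lemma hasFiniteKerCoker_torsionByMap_and_mulIndex_eq_of_injective {i : M →ₗ[R] N}
    (hi : Injective i) [Finite (N ⧸ range i)] :
    (torsionByMap t i).HasFiniteKerCoker ∧ (QuotSMulTop.map t i).HasFiniteKerCoker ∧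
      (torsionByMap t i).mulIndex = (QuotSMulTop.map t i).mulIndex := by
  have h := exact_map_mkQ_range i
  have hp := mkQ_surjective (range i)
  obtain ⟨δ, h₂, h₃⟩ := h.exists_torsionBy_connecting t hi hp
  have hker : Nat.card (ker (torsionByMap t i)) = 1 := by
    rw [ker_eq_bot.mpr (torsionByMap_injective t hi)]
    exact Nat.card_unique
  have hcoker := (exact_torsionByMap t hi h).card_quotient_range_eq_card_range
  have hker' : Nat.card (ker (QuotSMulTop.map t i)) = Nat.card (range δ) := by
    rw [exact_iff.mp h₃]
  have hcoker' := (QuotSMulTop.map_exact t h hp).card_quotient_range_eq_card_range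
  rw [card_range_of_surjective (QuotSMulTop.map_surjective t hp)] at hcoker'
  have hmid := h₂.card_eq_card_range_mul_card_range
  rw [card_torsionBy_eq_card_quotSMulTop] at hmid
  have : Finite (QuotSMulTop t (N ⧸ range i)) := Finite.of_surjective _ (mkQ_surjective _)
  have hpos : Nat.card (QuotSMulTop t (N ⧸ range i)) ≠ 0 := Nat.card_pos.ne'
  obtain ⟨h₁pos, hδpos⟩ := mul_ne_zero_iff.mp (hmid ▸ hpos)
  simp only [hasFiniteKerCoker_iff, mulIndex, hker, hcoker, hker', hcoker']
  refine ⟨⟨one_ne_zero, h₁pos⟩, ⟨hδpos, hpos⟩, ?_⟩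
  rw [hmid]
  push_cast
  field_simp

lemma hasFiniteKerCoker_torsionByMap_and_mulIndex_eq_of_surjective {p : N →ₗ[R] P}
    (hp : Surjective p) [Finite (ker p)] :
    (torsionByMap t p).HasFiniteKerCoker ∧ (QuotSMulTop.map t p).HasFiniteKerCoker ∧
      (torsionByMap t p).mulIndex = (QuotSMulTop.map t p).mulIndex := by
  have h := exact_subtype_ker_map p
  have hi := subtype_injective (ker p)
  obtain ⟨δ, h₂, h₃⟩ := h.exists_torsionBy_connecting t hi hp
  have hker : Nat.card (ker (torsionByMap t p)) = Nat.card (torsionBy R (ker p) t) := by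
    rw [exact_iff.mp (exact_torsionByMap t hi h),
      card_range_of_injective (torsionByMap_injective t hi)]
  have hcoker := h₂.card_quotient_range_eq_card_range
  have hker' : Nat.card (ker (QuotSMulTop.map t p)) =
      Nat.card (range (QuotSMulTop.map t (ker p).subtype)) := by
    rw [exact_iff.mp (QuotSMulTop.map_exact t h hp)]
  have hcoker' : Nat.card (QuotSMulTop t P ⧸ range (QuotSMulTop.map t p)) = 1 := by
    rw [range_eq_top.mpr (QuotSMulTop.map_surjective t hp)]
    exact Nat.card_unique
  have hmid := h₃.card_eq_card_range_mul_card_range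
  rw [← card_torsionBy_eq_card_quotSMulTop] at hmid
  have hpos : Nat.card (torsionBy R (ker p) t) ≠ 0 := Nat.card_pos.ne'
  obtain ⟨hδpos, h₃pos⟩ := mul_ne_zero_iff.mp (hmid ▸ hpos)
  simp only [hasFiniteKerCoker_iff, mulIndex, hker, hcoker, hker', hcoker']
  refine ⟨⟨hpos, hδpos⟩, ⟨h₃pos, one_ne_zero⟩, ?_⟩
  rw [hmid]
  push_cast
  field_simp

lemma hasFiniteKerCoker_torsionByMap_and_mulIndex_eq {f : M →ₗ[R] N} [Finite (ker f)]
    [Finite (N ⧸ range f)] :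
    (torsionByMap t f).HasFiniteKerCoker ∧ (QuotSMulTop.map t f).HasFiniteKerCoker ∧
      (torsionByMap t f).mulIndex = (QuotSMulTop.map t f).mulIndex := by
  have : Finite (ker f.rangeRestrict) := by rw [ker_rangeRestrict]; infer_instance
  have : Finite (N ⧸ range (range f).subtype) := by rw [range_subtype]; infer_instance
  obtain ⟨hK₁, hQ₁, h₁⟩ :=
    hasFiniteKerCoker_torsionByMap_and_mulIndex_eq_of_surjective (t := t) f.surjective_rangeRestrict
  obtain ⟨hK₂, hQ₂, h₂⟩ :=
    hasFiniteKerCoker_torsionByMap_and_mulIndex_eq_of_injective (t := t) (range f).injective_subtype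
  have hf : f = (range f).subtype ∘ₗ f.rangeRestrict := rfl
  rw [hf, torsionByMap_comp, QuotSMulTop.map_comp, mulIndex_comp hK₂ hK₁, mulIndex_comp hQ₂ hQ₁,
    h₁, h₂]
  exact ⟨(hasFiniteKerCoker_comp_iff_left hK₁).mpr hK₂,
    (hasFiniteKerCoker_comp_iff_left hQ₁).mpr hQ₂, rfl⟩

theorem hasFiniteKerCoker_torsionByToQuotSMulTop_iff (f : M →ₗ[R] N) [Finite (ker f)]
    [Finite (N ⧸ range f)] :
    (torsionByToQuotSMulTop t M).HasFiniteKerCoker ↔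
      (torsionByToQuotSMulTop t N).HasFiniteKerCoker := by
  obtain ⟨hK, hQ, -⟩ := hasFiniteKerCoker_torsionByMap_and_mulIndex_eq (t := t) (f := f)
  rw [← hasFiniteKerCoker_comp_iff_right hQ, quotSMulTopMap_comp_torsionByToQuotSMulTop,
    hasFiniteKerCoker_comp_iff_left hK]

theorem mulIndex_torsionByToQuotSMulTop_eq (f : M →ₗ[R] N) [Finite (ker f)]
    [Finite (N ⧸ range f)] (hM : (torsionByToQuotSMulTop t M).HasFiniteKerCoker) :
    (torsionByToQuotSMulTop t M).mulIndex = (torsionByToQuotSMulTop t N).mulIndex := by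
  obtain ⟨hK, hQ, h⟩ := hasFiniteKerCoker_torsionByMap_and_mulIndex_eq (t := t) (f := f)
  have hN := (hasFiniteKerCoker_torsionByToQuotSMulTop_iff f).mp hM
  have hsq := congrArg mulIndex (quotSMulTopMap_comp_torsionByToQuotSMulTop t f)
  rw [mulIndex_comp hQ hM, mulIndex_comp hN hK, h, mul_comm (mulIndex _)] at hsq
  exact mul_right_cancel₀ hQ.mulIndex_ne_zero hsq

end Submodule

lemma hasFiniteEuler_iff_and_eulerChar_eq (p : ℕ) [Fact p.Prime] (M : Type*) [AddCommGroup M]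
    [Module ℤ_[p]⟦X⟧ M] :
    (HasFiniteEuler p M ↔ (torsionByToQuotSMulTop (X : ℤ_[p]⟦X⟧) M).HasFiniteKerCoker) ∧
      eulerChar p M = (torsionByToQuotSMulTop (X : ℤ_[p]⟦X⟧) M).mulIndex := by
  have h : TM p M = (X : ℤ_[p]⟦X⟧) • ⊤ := ideal_span_singleton_smul _ _
  unfold HasFiniteEuler eulerChar gMap
  rw [h]
  exact ⟨Iff.rfl, rfl⟩

theorem stmt_13_general (p : ℕ) [Fact p.Prime] (M N : Type*)
    [AddCommGroup M] [Module (PowerSeries ℤ_[p]) M]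
    [AddCommGroup N] [Module (PowerSeries ℤ_[p]) N]
    (f : M →ₗ[PowerSeries ℤ_[p]] N)
    (hker : Finite (LinearMap.ker f)) (hcoker : Finite (N ⧸ LinearMap.range f)) :
    (HasFiniteEuler p M ↔ HasFiniteEuler p N) ∧
    (HasFiniteEuler p M → eulerChar p M = eulerChar p N) := by
  obtain ⟨hM, hχM⟩ := hasFiniteEuler_iff_and_eulerChar_eq p M
  obtain ⟨hN, hχN⟩ := hasFiniteEuler_iff_and_eulerChar_eq p N
  rw [hM, hN, hχM, hχN]
  exact ⟨hasFiniteKerCoker_torsionByToQuotSMulTop_iff f, mulIndex_torsionByToQuotSMulTop_eq f⟩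

/-- If `M`, `N` are finitely generated torsion modules over `Λ = ℤ_p⟦T⟧` and `f : M → N`
is `Λ`-linear with finite kernel and cokernel, then `M` has finite generalized Euler
characteristic iff `N` does, and in that case `char(M) = char(N)`. -/
theorem stmt_13 (p : ℕ) [Fact p.Prime] (M N : Type*)
    [AddCommGroup M] [Module (PowerSeries ℤ_[p]) M] [Module.Finite (PowerSeries ℤ_[p]) M]
    [AddCommGroup N] [Module (PowerSeries ℤ_[p]) N] [Module.Finite (PowerSeries ℤ_[p]) N]
    (hM : Module.IsTorsion (PowerSeries ℤ_[p]) M)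
    (hN : Module.IsTorsion (PowerSeries ℤ_[p]) N)
    (f : M →ₗ[PowerSeries ℤ_[p]] N)
    (hker : Finite (LinearMap.ker f)) (hcoker : Finite (N ⧸ LinearMap.range f)) :
    (HasFiniteEuler p M ↔ HasFiniteEuler p N) ∧
    (HasFiniteEuler p M → eulerChar p M = eulerChar p N) :=
  stmt_13_general p M N f hker hcoker
end
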